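/- For every n ≥ 0, the topological space T(D^n) obtained by applying the D-topology functor to the diffeological hemisphere D^n is homeomorphic to the unit n-disk; in particular T(Ĩ) is homeomorphic to [0,1] with its standard topology. -/

import Mathlib

open Set

/-- A diffeology on a type `X`: a family of distinguished parameterizations ("plots")
defined on open subsets of Euclidean spaces, containing all constant parameterizations,
local, and closed under precomposition with smooth maps. -/
structure Diffeology' (X : Type) : Type 1 where
  IsPlot : {n : ℕ} → Set (Fin n → ℝ) → ((Fin n → ℝ) → X) → Prop
  isPlot_const : ∀ {n : ℕ} (U : Set (Fin n → ℝ)) (x : X), IsOpen U →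
    IsPlot U fun _ => x
  isPlot_locality : ∀ {n : ℕ} (U : Set (Fin n → ℝ)) (P : (Fin n → ℝ) → X), IsOpen U →
    (∀ u ∈ U, ∃ W, IsOpen W ∧ u ∈ W ∧ W ⊆ U ∧ IsPlot W P) → IsPlot U P
  isPlot_comp : ∀ {n m : ℕ} (U : Set (Fin n → ℝ)) (P : (Fin n → ℝ) → X)
    (V : Set (Fin m → ℝ)) (Q : (Fin m → ℝ) → (Fin n → ℝ)),
    IsPlot U P → IsOpen U → IsOpen V → ContDiffOn ℝ (⊤ : ℕ∞) Q V → MapsTo Q V U →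
    IsPlot V (P ∘ Q)

variable {X Y Z : Type}

/-- A map between diffeological spaces is smooth if it takes plots to plots. -/
def DSmooth (dX : Diffeology' X) (dY : Diffeology' Y) (f : X → Y) : Prop :=
  ∀ {n : ℕ} (U : Set (Fin n → ℝ)) (P : (Fin n → ℝ) → X),
    IsOpen U → dX.IsPlot U P → dY.IsPlot U (f ∘ P)

theorem DSmooth.comp {dX : Diffeology' X} {dY : Diffeology' Y} {dZ : Diffeology' Z}
    {g : Y → Z} {f : X → Y} (hg : DSmooth dY dZ g) (hf : DSmooth dX dY f) :
    DSmooth dX dZ (g ∘ f) :=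
  fun U P hU hP => hg U (f ∘ P) hU (hf U P hU hP)

theorem DSmooth.const {dX : Diffeology' X} {dY : Diffeology' Y} (y : Y) :
    DSmooth dX dY fun _ => y :=
  fun U _ hU _ => dY.isPlot_const U y hU

/-- An induction: an injective smooth map such that `X` carries the pullback diffeology,
i.e. a parameterization is a plot of `X` iff its composition with `f` is a plot of `Y`. -/
def IsInduction (dX : Diffeology' X) (dY : Diffeology' Y) (f : X → Y) : Prop :=
  Function.Injective f ∧
    ∀ {n : ℕ} (U : Set (Fin n → ℝ)) (P : (Fin n → ℝ) → X), IsOpen U →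
      (dX.IsPlot U P ↔ dY.IsPlot U (f ∘ P))

/-- `Q` lifts locally along `f` through plots of `X`. -/
def LiftsLocally (dX : Diffeology' X) (f : X → Y) {n : ℕ}
    (U : Set (Fin n → ℝ)) (Q : (Fin n → ℝ) → Y) : Prop :=
  ∀ u ∈ U, ∃ W, IsOpen W ∧ u ∈ W ∧ W ⊆ U ∧
    ∃ P : (Fin n → ℝ) → X, dX.IsPlot W P ∧ ∀ w ∈ W, f (P w) = Q w

/-- A subduction: a surjective smooth map such that `Y` carries the pushforward diffeology,
i.e. every plot of `Y` locally lifts along `f` through plots of `X`. -/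
def IsSubduction (dX : Diffeology' X) (dY : Diffeology' Y) (f : X → Y) : Prop :=
  Function.Surjective f ∧ DSmooth dX dY f ∧
    ∀ {n : ℕ} (U : Set (Fin n → ℝ)) (Q : (Fin n → ℝ) → Y), IsOpen U →
      dY.IsPlot U Q → LiftsLocally dX f U Q

/-- A diffeomorphism: a smooth map with a smooth two-sided inverse. -/
def IsDiffeomorphism (dX : Diffeology' X) (dY : Diffeology' Y) (f : X → Y) : Prop :=
  DSmooth dX dY f ∧ ∃ g : Y → X,
    DSmooth dY dX g ∧ Function.LeftInverse g f ∧ Function.RightInverse g f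

/-- The standard diffeology on a normed space: plots are the smooth parameterizations. -/
noncomputable def stdDiffeology (E : Type) [NormedAddCommGroup E] [NormedSpace ℝ E] :
    Diffeology' E where
  IsPlot {n} U P := IsOpen U → ContDiffOn ℝ (⊤ : ℕ∞) P U
  isPlot_const _ _ _ _ := contDiffOn_const
  isPlot_locality U P hU h _ := by
    intro u hu
    obtain ⟨W, hWo, huW, _, hPW⟩ := h u hu
    exact ((hPW hWo u huW).contDiffAt (hWo.mem_nhds huW)).contDiffWithinAt
  isPlot_comp U P V Q hP hU hV hQ hmap _ := (hP hU).comp hQ hmap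

/-- `γ t = 0` for `t ≤ 0` and `exp (-1/t)` for `t > 0`. -/
noncomputable def gammaFn (t : ℝ) : ℝ := if t ≤ 0 then 0 else Real.exp (-1 / t)

/-- The smooth step function `λ t = γ t / (γ t + γ (1 - t))`. -/
noncomputable def smoothStep (t : ℝ) : ℝ := gammaFn t / (gammaFn t + gammaFn (1 - t))

/-- The smooth step `λ` viewed as a (surjective) map `ℝ → [0,1]`. -/
noncomputable def stepIcc (t : ℝ) : Icc (0 : ℝ) 1 :=
  Set.projIcc 0 1 zero_le_one (smoothStep t)

/-- `0` as a point of `[0,1]`. -/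
def I0 : Icc (0 : ℝ) 1 := ⟨0, by constructor <;> norm_num⟩

/-- `1` as a point of `[0,1]`. -/
def I1 : Icc (0 : ℝ) 1 := ⟨1, by constructor <;> norm_num⟩

/-- `dP` is the product diffeology of `dA` and `dB`. -/
def IsProductDiffeology {A B : Type} (dA : Diffeology' A) (dB : Diffeology' B)
    (dP : Diffeology' (A × B)) : Prop :=
  ∀ {n : ℕ} (U : Set (Fin n → ℝ)) (P : (Fin n → ℝ) → A × B), IsOpen U →
    (dP.IsPlot U P ↔ dA.IsPlot U (Prod.fst ∘ P) ∧ dB.IsPlot U (Prod.snd ∘ P))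

/-- `F` is a smooth homotopy from `f₀` to `f₁`, with parameter space `Ĩ = [0,1]`
(whose diffeology enters through the given diffeology `dXT` on `X × Ĩ`). -/
def IsHomotopy {X Y : Type} (dXT : Diffeology' (X × Icc (0 : ℝ) 1)) (dY : Diffeology' Y)
    (f₀ f₁ : X → Y) (F : X × Icc (0 : ℝ) 1 → Y) : Prop :=
  DSmooth dXT dY F ∧ (∀ x, F (x, I0) = f₀ x) ∧ ∀ x, F (x, I1) = f₁ x

/-- The gluing map `q_n : ℝ^{n+1} × ℝ → ℝ^{n+2}`,
`q_n (v, t) = (v₁, …, vₙ, v_{n+1} cos πt, v_{n+1} sin πt)` (ambient version). -/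
noncomputable def qmap (n : ℕ) (v : EuclideanSpace ℝ (Fin (n + 1))) (t : ℝ) :
    EuclideanSpace ℝ (Fin (n + 2)) := WithLp.toLp 2 fun i =>
  if h : (i : ℕ) < n then v ⟨i, by omega⟩
  else if (i : ℕ) = n then v (Fin.last n) * Real.cos (Real.pi * t)
  else v (Fin.last n) * Real.sin (Real.pi * t)

/-- The generating parameterization `Q_n ∘ λⁿ : ℝⁿ → D^n ⊆ ℝ^{n+1}` (ambient version),
defined inductively via `q`. -/
noncomputable def hemiMap : (n : ℕ) → (Fin n → ℝ) → EuclideanSpace ℝ (Fin (n + 1))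
  | 0, _ => WithLp.toLp 2 fun _ => 1
  | n + 1, x => qmap n (hemiMap n (x ∘ Fin.castSucc)) (smoothStep (x (Fin.last n)))

/-- The upper hemisphere `D^n = {v ∈ ℝ^{n+1} : ‖v‖ = 1, v_{n+1} ≥ 0}`. -/
def upperHemi (n : ℕ) : Set (EuclideanSpace ℝ (Fin (n + 1))) :=
  {v | ‖v‖ = 1 ∧ 0 ≤ v (Fin.last n)}

/-- The equator `S̃^{n-1} ⊆ D^n`, i.e. the points with vanishing last coordinate. -/
def equator (n : ℕ) : Set (upperHemi n) :=
  {v | (v : EuclideanSpace ℝ (Fin (n + 1))) (Fin.last n) = 0}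

/-- The lower face `D⁻^{n-1} ⊆ S̃^{n-1} ⊆ D^n`: points of the equator whose `n`-th
coordinate is non-positive (meaningful for `n ≥ 1`). -/
def lowerFace (n : ℕ) : Set (upperHemi n) :=
  {v | (v : EuclideanSpace ℝ (Fin (n + 1))) (Fin.last n) = 0 ∧
    (v : EuclideanSpace ℝ (Fin (n + 1))) ⟨n - 1, by omega⟩ ≤ 0}

/-- The data of the diffeological hemispheres: each `D^n` carries the quotient
diffeology along the generating parameterization `Q_n ∘ λⁿ : ℝⁿ → D^n`, together
with the map `Q_n : Ĩⁿ → D^n` and the upper/lower inclusions `D^n → D^{n+1}`. -/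
structure HemiData : Type 1 where
  /-- the diffeology of `D^n` -/
  dD : ∀ n : ℕ, Diffeology' (upperHemi n)
  /-- the generating parameterization `Q_n ∘ λⁿ : ℝⁿ → D^n` -/
  Q : ∀ n : ℕ, (Fin n → ℝ) → upperHemi n
  hQ : ∀ (n : ℕ) (x : Fin n → ℝ),
    (Q n x : EuclideanSpace ℝ (Fin (n + 1))) = hemiMap n x
  /-- `D^n` carries the quotient (pushforward) diffeology along `Q_n ∘ λⁿ` -/
  subd : ∀ n : ℕ, IsSubduction (stdDiffeology (Fin n → ℝ)) (dD n) (Q n)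
  /-- the map `Q_n : Ĩⁿ → D^n` -/
  QI : ∀ n : ℕ, ((Fin n → Icc (0 : ℝ) 1) → upperHemi n)
  hQI : ∀ (n : ℕ) (x : Fin n → ℝ), QI n (fun i => stepIcc (x i)) = Q n x
  /-- the inclusion `D^n → D^{n+1}`, `v ↦ (v, 0)` -/
  incl : ∀ n : ℕ, upperHemi n → upperHemi (n + 1)
  hincl : ∀ (n : ℕ) (v : upperHemi n),
    (∀ i : Fin (n + 1), (incl n v : EuclideanSpace ℝ (Fin (n + 2))) (Fin.castSucc i) =
      (v : EuclideanSpace ℝ (Fin (n + 1))) i) ∧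
    (incl n v : EuclideanSpace ℝ (Fin (n + 2))) (Fin.last (n + 1)) = 0
  /-- the lower inclusion `D^n ≅ D⁻^n ⊆ D^{n+1}`, `v ↦ (v₁, …, vₙ, -v_{n+1}, 0)` -/
  incl' : ∀ n : ℕ, upperHemi n → upperHemi (n + 1)
  hincl' : ∀ (n : ℕ) (v : upperHemi n),
    (∀ i : Fin (n + 1), (incl' n v : EuclideanSpace ℝ (Fin (n + 2))) (Fin.castSucc i) =
      (if i = Fin.last n then -(v : EuclideanSpace ℝ (Fin (n + 1))) i
        else (v : EuclideanSpace ℝ (Fin (n + 1))) i)) ∧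
    (incl' n v : EuclideanSpace ℝ (Fin (n + 2))) (Fin.last (n + 1)) = 0

/-- The D-topology of a diffeological space: the final topology with respect to
all plots. -/
def dTop {X : Type} (dX : Diffeology' X) : TopologicalSpace X :=
  ⨆ (n : ℕ) (U : Set (Fin n → ℝ)) (P : (Fin n → ℝ) → X) (_ : IsOpen U)
    (_ : dX.IsPlot U P), TopologicalSpace.coinduced (fun u : U => P u) inferInstance


section Auxiliary
open Topology

/-! ### Smooth step facts -/

theorem gammaFn_eq : gammaFn = expNegInvGlue := by
  funext t; simp [gammaFn, expNegInvGlue, neg_div, one_div]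

theorem smoothStep_eq : smoothStep = Real.smoothTransition := by
  funext t; simp [smoothStep, Real.smoothTransition, gammaFn_eq]

theorem smoothStep_cont : Continuous smoothStep := by
  rw [smoothStep_eq]; exact Real.smoothTransition.continuous

theorem smoothStep_mem (t : ℝ) : smoothStep t ∈ Icc (0:ℝ) 1 := by
  rw [smoothStep_eq]
  exact ⟨Real.smoothTransition.nonneg t, Real.smoothTransition.le_one t⟩

theorem exists_smoothStep_eq (t : ℝ) : ∃ s ∈ Icc (0:ℝ) 1, smoothStep s = smoothStep t := by
  have h := intermediate_value_Icc (zero_le_one) smoothStep_cont.continuousOn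
  have ht : smoothStep t ∈ Icc (smoothStep 0) (smoothStep 1) := by
    rw [smoothStep_eq, Real.smoothTransition.zero, Real.smoothTransition.one]
    rw [← smoothStep_eq]; exact smoothStep_mem t
  obtain ⟨s, hs, hst⟩ := h ht
  exact ⟨s, hs, hst⟩

theorem stepIcc_cont : Continuous stepIcc := continuous_projIcc.comp smoothStep_cont

theorem exists_stepIcc_eq (y : Icc (0:ℝ) 1) : ∃ s ∈ Icc (0:ℝ) 1, stepIcc s = y := by
  have h := intermediate_value_Icc (zero_le_one) smoothStep_cont.continuousOn
  have hy : (y : ℝ) ∈ Icc (smoothStep 0) (smoothStep 1) := by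
    rw [smoothStep_eq, Real.smoothTransition.zero, Real.smoothTransition.one]
    exact y.2
  obtain ⟨s, hs, hst⟩ := h hy
  refine ⟨s, hs, ?_⟩
  rw [stepIcc, hst, Set.projIcc_of_mem zero_le_one y.2]

/-! ### D-topology of a subduction -/

theorem coinduced_le_dTop {X : Type} (dX : Diffeology' X) {n : ℕ} {U : Set (Fin n → ℝ)}
    {P : (Fin n → ℝ) → X} (hU : IsOpen U) (hP : dX.IsPlot U P) :
    TopologicalSpace.coinduced (fun u : U => P u) inferInstance ≤ dTop dX :=
  le_iSup_of_le n <| le_iSup_of_le U <| le_iSup_of_le P <| le_iSup_of_le hU <|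
    le_iSup_of_le hP le_rfl

theorem plots_continuousOn {X E : Type} [NormedAddCommGroup E] [NormedSpace ℝ E]
    [tX : TopologicalSpace X] {f : E → X} {dX : Diffeology' X}
    (hsub : IsSubduction (stdDiffeology E) dX f) (hf : Continuous f)
    {n : ℕ} {U : Set (Fin n → ℝ)} {P : (Fin n → ℝ) → X} (hU : IsOpen U)
    (hP : dX.IsPlot U P) : ContinuousOn P U := by
  intro u hu
  obtain ⟨W, hWo, huW, hWU, P', hP', hfP'⟩ := hsub.2.2 U P hU hP u hu
  have hc : ContinuousOn (f ∘ P') W := hf.comp_continuousOn (hP' hWo).continuousOn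
  have hPW : ContinuousOn P W := hc.congr fun w hw => (hfP' w hw).symm
  exact ((hPW.continuousAt (hWo.mem_nhds huW)).continuousWithinAt)

theorem dTop_eq_of_subduction {X E : Type} [NormedAddCommGroup E] [NormedSpace ℝ E]
    [tX : TopologicalSpace X] [T2Space X] {f : E → X} {dX : Diffeology' X}
    (hsub : IsSubduction (stdDiffeology E) dX f) (hf : Continuous f)
    {K : Set E} (hK : IsCompact K) (hKs : ∀ x, ∃ k ∈ K, f k = x)
    {m : ℕ} {P : (Fin m → ℝ) → E} (hP : (stdDiffeology E).IsPlot univ P)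
    (hPq : IsQuotientMap P) : dTop dX = tX := by
  apply le_antisymm
  · refine iSup_le fun n => iSup_le fun U => iSup_le fun Q => iSup_le fun hU =>
      iSup_le fun hQ => ?_
    rw [← continuous_iff_coinduced_le]
    exact continuousOn_iff_continuous_restrict.mp (plots_continuousOn hsub hf hU hQ)
  · have h1 : tX ≤ TopologicalSpace.coinduced f inferInstance := by
      rw [TopologicalSpace.le_def]
      intro s hs
      rw [isOpen_coinduced] at hs
      have hA : IsClosed (f ⁻¹' sᶜ) := by rw [preimage_compl]; exact hs.isClosed_compl
      have him : sᶜ = f '' (f ⁻¹' sᶜ ∩ K) := by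
        apply Subset.antisymm
        · intro x hx
          obtain ⟨k, hk, hfk⟩ := hKs x
          exact ⟨k, ⟨by simp only [mem_preimage, hfk]; exact hx, hk⟩, hfk⟩
        · rintro _ ⟨k, ⟨hk1, _⟩, rfl⟩; exact hk1
      rw [← isClosed_compl_iff, him]
      exact ((hK.inter_left hA).image hf).isClosed
    have hplot : dX.IsPlot univ (f ∘ P) := hsub.2.1 univ P isOpen_univ hP
    refine le_trans h1 ?_
    rw [TopologicalSpace.le_def]
    intro s hs
    have hval := (Homeomorph.Set.univ (Fin m → ℝ)).isQuotientMap
    have h3 := coinduced_le_dTop dX isOpen_univ hplot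
    rw [TopologicalSpace.le_def] at h3
    have h4 := h3 s hs
    rw [isOpen_coinduced] at h4 ⊢
    rw [← hPq.isOpen_preimage]
    exact hval.isOpen_preimage.mp h4

/-! ### The hemisphere as a subset of Euclidean space -/

theorem upperHemi_sum_sq {n : ℕ} (v : EuclideanSpace ℝ (Fin (n+1))) (hv : v ∈ upperHemi n) :
    ∑ i, v i ^ 2 = 1 := by
  have h := hv.1
  rw [EuclideanSpace.norm_eq] at h
  rw [Real.sqrt_eq_one] at h
  simpa [Real.norm_eq_abs, sq_abs] using h

theorem sum_castSucc_sq {n : ℕ} (v : EuclideanSpace ℝ (Fin (n+1))) (hv : v ∈ upperHemi n) :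
    ∑ i : Fin n, v i.castSucc ^ 2 = 1 - v (Fin.last n) ^ 2 := by
  have h := upperHemi_sum_sq v hv
  rw [Fin.sum_univ_castSucc] at h
  linarith

noncomputable def hemiEquiv (n : ℕ) :
    upperHemi n ≃ Metric.closedBall (0 : EuclideanSpace ℝ (Fin n)) 1 where
  toFun v := ⟨(WithLp.toLp 2 (fun i : Fin n => (v : EuclideanSpace ℝ (Fin (n+1))) i.castSucc) :
      EuclideanSpace ℝ (Fin n)), by
    rw [Metric.mem_closedBall, dist_zero_right, EuclideanSpace.norm_eq]
    have h1 : ∑ i : Fin n, ‖(v : EuclideanSpace ℝ (Fin (n+1))) i.castSucc‖ ^ 2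
        = 1 - (v : EuclideanSpace ℝ (Fin (n+1))) (Fin.last n) ^ 2 := by
      simpa [Real.norm_eq_abs, sq_abs] using sum_castSucc_sq v.1 v.2
    simp only [WithLp.ofLp_toLp]
    rw [h1]
    refine le_trans (Real.sqrt_le_sqrt ?_) (le_of_eq Real.sqrt_one)
    nlinarith [sq_nonneg ((v : EuclideanSpace ℝ (Fin (n+1))) (Fin.last n))]⟩
  invFun w := ⟨(WithLp.toLp 2 (Fin.snoc (w : EuclideanSpace ℝ (Fin n))
      (Real.sqrt (1 - ∑ i, (w : EuclideanSpace ℝ (Fin n)) i ^ 2)) : Fin (n+1) → ℝ) :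
      EuclideanSpace ℝ (Fin (n+1))), by
    have hw : ∑ i, (w : EuclideanSpace ℝ (Fin n)) i ^ 2 ≤ 1 := by
      have hww := w.2
      rw [Metric.mem_closedBall, dist_zero_right, EuclideanSpace.norm_eq] at hww
      have h2 : ∑ i, ‖(w : EuclideanSpace ℝ (Fin n)) i‖ ^ 2 ≤ 1 := by
        nlinarith [Real.sq_sqrt
            (by positivity : (0:ℝ) ≤ ∑ i, ‖(w : EuclideanSpace ℝ (Fin n)) i‖ ^ 2),
          Real.sqrt_nonneg (∑ i, ‖(w : EuclideanSpace ℝ (Fin n)) i‖ ^ 2)]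
      simpa [Real.norm_eq_abs, sq_abs] using h2
    constructor
    · rw [EuclideanSpace.norm_eq, Real.sqrt_eq_one]
      have habs : ∀ i : Fin (n+1), ‖(Fin.snoc (w : EuclideanSpace ℝ (Fin n))
          (Real.sqrt (1 - ∑ i, (w : EuclideanSpace ℝ (Fin n)) i ^ 2)) : Fin (n+1) → ℝ) i‖ ^ 2
          = (Fin.snoc (w : EuclideanSpace ℝ (Fin n))
          (Real.sqrt (1 - ∑ i, (w : EuclideanSpace ℝ (Fin n)) i ^ 2)) : Fin (n+1) → ℝ) i ^ 2 := by
        intro i; rw [Real.norm_eq_abs, sq_abs]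
      simp only [WithLp.ofLp_toLp]
      rw [Finset.sum_congr rfl fun i _ => habs i, Fin.sum_univ_castSucc]
      simp only [Fin.snoc_castSucc, Fin.snoc_last]
      rw [Real.sq_sqrt (by linarith)]
      ring
    · rw [WithLp.ofLp_toLp, Fin.snoc_last]
      exact Real.sqrt_nonneg _⟩
  left_inv v := by
    apply Subtype.ext
    refine PiLp.ext fun i => ?_
    refine Fin.lastCases ?_ (fun j => ?_) i
    · show (Fin.snoc _ _ : Fin (n+1) → ℝ) (Fin.last n) = _
      rw [Fin.snoc_last]
      have h1 : ∑ i : Fin n, (v : EuclideanSpace ℝ (Fin (n+1))) i.castSucc ^ 2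
          = 1 - (v : EuclideanSpace ℝ (Fin (n+1))) (Fin.last n) ^ 2 := sum_castSucc_sq v.1 v.2
      rw [h1]
      rw [show 1 - (1 - (v : EuclideanSpace ℝ (Fin (n+1))) (Fin.last n) ^ 2)
          = (v : EuclideanSpace ℝ (Fin (n+1))) (Fin.last n) ^ 2 by ring]
      rw [Real.sqrt_sq v.2.2]
    · show (Fin.snoc _ _ : Fin (n+1) → ℝ) j.castSucc = _
      rw [Fin.snoc_castSucc]
  right_inv w := by
    apply Subtype.ext
    refine PiLp.ext fun i => ?_
    show (Fin.snoc _ _ : Fin (n+1) → ℝ) i.castSucc = _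
    rw [Fin.snoc_castSucc]

theorem upperHemi_compact (n : ℕ) : IsCompact (upperHemi n) := by
  apply Metric.isCompact_of_isClosed_isBounded
  · have heq : upperHemi n = (fun v : EuclideanSpace ℝ (Fin (n+1)) => ‖v‖) ⁻¹' {1} ∩
        (fun v : EuclideanSpace ℝ (Fin (n+1)) => v (Fin.last n)) ⁻¹' (Ici 0) := by
      ext v; simp [upperHemi, and_comm]
    rw [heq]
    exact (isClosed_singleton.preimage continuous_norm).inter
      (isClosed_Ici.preimage (PiLp.continuous_apply _ _ _))
  · apply Bornology.IsBounded.subset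
      (Metric.isBounded_closedBall (x := (0 : EuclideanSpace ℝ (Fin (n+1)))) (r := 1))
    intro v hv
    rw [Metric.mem_closedBall, dist_zero_right, hv.1]

theorem hemiEquiv_continuous (n : ℕ) : Continuous (hemiEquiv n) := by
  apply Continuous.subtype_mk
  exact (PiLp.continuous_toLp 2 _).comp
    (continuous_pi fun i => (PiLp.continuous_apply _ _ _).comp continuous_subtype_val)

noncomputable def hemiHomeo (n : ℕ) :
    upperHemi n ≃ₜ Metric.closedBall (0 : EuclideanSpace ℝ (Fin n)) 1 :=
  have : CompactSpace (upperHemi n) := isCompact_iff_compactSpace.mp (upperHemi_compact n)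
  Continuous.homeoOfEquivCompactToT2 (hemiEquiv_continuous n)

/-! ### Continuity of the generating maps -/

theorem qmap_continuous (n : ℕ) :
    Continuous fun p : EuclideanSpace ℝ (Fin (n+1)) × ℝ => qmap n p.1 p.2 := by
  unfold qmap
  refine (PiLp.continuous_toLp 2 _).comp ?_
  apply continuous_pi
  intro i
  by_cases h : (i : ℕ) < n
  · simp only [h, dif_pos]
    exact (PiLp.continuous_apply _ _ _).comp continuous_fst
  · simp only [h, dif_neg, not_false_iff]
    by_cases h2 : (i : ℕ) = n
    · simp only [h2, if_pos]
      exact ((PiLp.continuous_apply _ _ _).comp continuous_fst).mul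
        (Real.continuous_cos.comp (continuous_const.mul continuous_snd))
    · simp only [h2, if_neg, not_false_iff]
      exact ((PiLp.continuous_apply _ _ _).comp continuous_fst).mul
        (Real.continuous_sin.comp (continuous_const.mul continuous_snd))

theorem hemiMap_continuous (n : ℕ) : Continuous (hemiMap n) := by
  induction n with
  | zero => exact continuous_const
  | succ n ih =>
    show Continuous fun x : Fin (n+1) → ℝ =>
      qmap n (hemiMap n (x ∘ Fin.castSucc)) (smoothStep (x (Fin.last n)))
    exact (qmap_continuous n).comp
      ((ih.comp (continuous_pi fun i => continuous_apply _)).prodMk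
        (smoothStep_cont.comp (continuous_apply _)))

end Auxiliary

/-- the D-topology of the diffeological hemisphere `D^n` is homeomorphic
to the unit `n`-disk; in particular the D-topology of `Ĩ` is homeomorphic to `[0,1]`
with its standard topology. -/
theorem dTop_hemisphere_homeomorphic_disk
    (hd : HemiData)
    (dI' : Diffeology' (Icc (0 : ℝ) 1))
    (hdI' : IsSubduction (stdDiffeology ℝ) dI' stepIcc) :
    (∀ n : ℕ,
      Nonempty (@Homeomorph (upperHemi n)
        (Metric.closedBall (0 : EuclideanSpace ℝ (Fin n)) 1)
        (dTop (hd.dD n)) inferInstance)) ∧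
    Nonempty (@Homeomorph (Icc (0 : ℝ) 1) (Icc (0 : ℝ) 1) (dTop dI') inferInstance) := by
  constructor
  · intro n
    have hf : Continuous (hd.Q n) := by
      have hco : (Subtype.val ∘ hd.Q n) = hemiMap n := funext (hd.hQ n)
      exact continuous_induced_rng.mpr (hco ▸ hemiMap_continuous n)
    have hKs : ∀ y, ∃ k ∈ Icc (0 : Fin n → ℝ) 1, hd.Q n k = y := by
      intro y
      obtain ⟨x, rfl⟩ := (hd.subd n).1 y
      choose s hmem heq using fun i => exists_smoothStep_eq (x i)
      refine ⟨s, ?_, ?_⟩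
      · rw [mem_Icc]
        exact ⟨fun i => (hmem i).1, fun i => (hmem i).2⟩
      · rw [← hd.hQI n s, ← hd.hQI n x]
        congr 1
        funext i
        show stepIcc (s i) = stepIcc (x i)
        rw [stepIcc, stepIcc, heq i]
    have hP : (stdDiffeology (Fin n → ℝ)).IsPlot univ id := fun _ => contDiffOn_id
    have hEq : dTop (hd.dD n) = (inferInstance : TopologicalSpace (upperHemi n)) :=
      dTop_eq_of_subduction (hd.subd n) hf isCompact_Icc hKs hP Topology.IsQuotientMap.id
    rw [hEq]
    exact ⟨hemiHomeo n⟩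
  · have hP : (stdDiffeology ℝ).IsPlot univ (fun v : Fin 1 → ℝ => v 0) := fun _ =>
      (ContinuousLinearMap.proj (R := ℝ) (φ := fun _ : Fin 1 => ℝ) 0).contDiff.contDiffOn
    have hPq : Topology.IsQuotientMap (fun v : Fin 1 → ℝ => v 0) :=
      (Homeomorph.funUnique (Fin 1) ℝ).isQuotientMap
    have hEq : dTop dI' = (inferInstance : TopologicalSpace (Icc (0:ℝ) 1)) :=
      dTop_eq_of_subduction hdI' stepIcc_cont isCompact_Icc exists_stepIcc_eq hP hPq
    rw [hEq]
    exact ⟨Homeomorph.refl _⟩
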